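/- arXiv:1206.0827 — 5 statements merged into one kernel-verified Lean document; each statement's English description precedes it below -/
import Mathlib

section
/- Let v > 0 and let μ be the centered Gaussian probability measure on ℝ with variance v. Then for every a ∈ ℝ and every ε ≥ 0, |μ([a − ε, a + ε]) − 2ε/√(2πv)| ≤ ε(|a| + ε)²/(√(2π) v^{3/2}). (This is the quantitative two-term small-ball expansion underlying Lemma 1(1) in the constant-volatility case: the Gaussian probability of an interval of length 2ε centered at −a equals 2ε·φ(0)/√v up to an error controlled by a² and ε.) -/
open MeasureTheory ProbabilityTheory

/-!
The Gaussian density `p` is maximal at the mean, where it equals `1/√(2πv)`, and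
`0 ≤ p(0) - p(x) = p(0) (1 - exp (-x²/(2v))) ≤ p(0) x²/(2v)`. On `[a - ε, a + ε]` we have
`x² ≤ (|a| + ε)²`, so integrating over an interval of length `2ε` gives the error
`2ε · p(0) (|a| + ε)²/(2v) = ε (|a| + ε)² / (√(2π) v^{3/2})`.
-/

open Real Set
open scoped NNReal

lemma gaussianPDFReal_self (μ : ℝ) (v : ℝ≥0) :
    gaussianPDFReal μ v μ = (√(2 * π * v))⁻¹ := by
  simp [gaussianPDFReal]

lemma abs_gaussianPDFReal_sub_self_le (μ : ℝ) (v : ℝ≥0) (x : ℝ) :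
    |gaussianPDFReal μ v x - gaussianPDFReal μ v μ| ≤
      gaussianPDFReal μ v μ * ((x - μ) ^ 2 / (2 * v)) := by
  set t := (x - μ) ^ 2 / (2 * v)
  have ht : 0 ≤ t := by positivity
  have hpdf : gaussianPDFReal μ v x = gaussianPDFReal μ v μ * exp (-t) := by
    rw [gaussianPDFReal_self, gaussianPDFReal, neg_div]
  have hexp_le : exp (-t) ≤ 1 := exp_le_one_iff.2 (neg_nonpos.2 ht)
  have hc := gaussianPDFReal_nonneg μ v μ
  rw [hpdf, abs_sub_comm, abs_of_nonneg (by nlinarith)]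
  nlinarith [one_sub_le_exp_neg t]

lemma gaussianReal_toReal_apply (μ : ℝ) {v : ℝ≥0} (hv : v ≠ 0) (s : Set ℝ) :
    (gaussianReal μ v s).toReal = ∫ x in s, gaussianPDFReal μ v x := by
  rw [gaussianReal_apply_eq_integral μ hv s,
    ENNReal.toReal_ofReal (integral_nonneg (gaussianPDFReal_nonneg μ v))]

lemma abs_setIntegral_Icc_sub_le {f : ℝ → ℝ} {a b c K : ℝ} (hab : a ≤ b)
    (hf : IntegrableOn f (Icc a b)) (hK : ∀ x ∈ Icc a b, |f x - c| ≤ K) :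
    |(∫ x in Icc a b, f x) - (b - a) * c| ≤ (b - a) * K := by
  have hvol : volume.real (Icc a b) = b - a := Real.volume_real_Icc_of_le hab
  have hconst : ∫ _ in Icc a b, c = (b - a) * c := by
    rw [setIntegral_const, hvol, smul_eq_mul]
  rw [← hconst, ← integral_sub hf (integrable_const c), ← hvol, mul_comm, ← Real.norm_eq_abs]
  exact norm_setIntegral_le_of_norm_le_const (measure_Icc_lt_top (μ := volume)) hK

lemma sqrt_two_pi_mul_rpow_three_halves (v : ℝ) (hv : 0 ≤ v) :
    √(2 * π) * v ^ ((3 : ℝ) / 2) = √(2 * π * v) * v := by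
  rw [sqrt_mul (by positivity : (0 : ℝ) ≤ 2 * π) v, show (3 : ℝ) / 2 = 1 / 2 + 1 by norm_num,
    rpow_add_of_nonneg hv (by norm_num) (by norm_num), rpow_one, ← sqrt_eq_rpow]
  ring

/-- Quantitative two-term small-ball expansion underlying Lemma 1(1), constant-volatility case:
for a centered Gaussian measure with variance `v > 0`,
`|μ([a−ε, a+ε]) − 2ε/√(2πv)| ≤ ε(|a|+ε)² / (√(2π) v^{3/2})`. -/
theorem gaussian_interval_expansion (v : NNReal) (hv : 0 < v) (a ε : ℝ) (hε : 0 ≤ ε) :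
    |(gaussianReal 0 v (Set.Icc (a - ε) (a + ε))).toReal -
        2 * ε / Real.sqrt (2 * Real.pi * (v : ℝ))| ≤
      ε * (|a| + ε) ^ 2 / (Real.sqrt (2 * Real.pi) * (v : ℝ) ^ ((3 : ℝ) / 2)) := by
  have hpdf_bound : ∀ x ∈ Icc (a - ε) (a + ε), |gaussianPDFReal 0 v x - gaussianPDFReal 0 v 0| ≤
      gaussianPDFReal 0 v 0 * ((|a| + ε) ^ 2 / (2 * v)) := fun x hx ↦ by
    have hx_sq : x ^ 2 ≤ (|a| + ε) ^ 2 :=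
      sq_le_sq' (by linarith [neg_abs_le a, hx.1]) (by linarith [le_abs_self a, hx.2])
    have h := abs_gaussianPDFReal_sub_self_le 0 v x
    rw [sub_zero] at h
    refine h.trans ?_
    have := gaussianPDFReal_nonneg 0 v 0
    gcongr
  have hinterval := abs_setIntegral_Icc_sub_le (by linarith) (integrable_gaussianPDFReal 0 v).integrableOn
    hpdf_bound
  rw [← gaussianReal_toReal_apply 0 hv.ne', gaussianPDFReal_self] at hinterval
  rw [sqrt_two_pi_mul_rpow_three_halves v v.2]
  convert hinterval using 2 <;> field_simp <;> ring
end

section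
/- Let v > 0, let X be a real random variable distributed as the centered Gaussian measure with variance v, and let J be any real random variable independent of X. Then for every ε ≥ 0 and every δ > 0, |P(|X + J| ≤ ε) − 2ε/√(2πv)| ≤ (4ε/√(2πv))·P(|J| ≥ δ) + (ε/(√(2π) v^{3/2}))·E[(|J| + ε)²·1_{|J| < δ}]. (This is a fully quantitative constant-volatility version of Lemma 2: the small-ball probability of a jump diffusion increment equals the pure-Gaussian value 2ε·φ(0)/√v up to an explicit error coming from large jumps and from the second moment of small jumps.) -/
/-!
Conditioning on `J` (independence and Fubini) reduces the claim to the Gaussian mass of the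
interval `[-j - ε, -j + ε]` for a fixed shift `j`. On that interval the density differs from its
peak value `(2πv)^{-1/2}` by `(2πv)^{-1/2} (1 - exp(-x²/2v))`, which is at most the peak value
and at most `(2πv)^{-1/2} x²/2v` with `|x| ≤ |j| + ε`; the first bound is used on `{|J| ≥ δ}`,
the second on `{|J| < δ}`.
-/

open MeasureTheory ProbabilityTheory Set Real

lemma abs_integral_le_mul_measureReal_compl_add_setIntegral {Ω : Type*} [MeasurableSpace Ω]
    {μ : Measure Ω} [IsFiniteMeasure μ] {f g : Ω → ℝ} {s : Set Ω} {M : ℝ}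
    (hs : MeasurableSet s) (hf : Integrable f μ) (hg : IntegrableOn g s μ)
    (hfg : ∀ x ∈ s, |f x| ≤ g x) (hfM : ∀ x ∈ sᶜ, |f x| ≤ M) :
    |∫ x, f x ∂μ| ≤ M * μ.real sᶜ + ∫ x in s, g x ∂μ := by
  have hon : |∫ x in s, f x ∂μ| ≤ ∫ x in s, g x ∂μ :=
    (abs_integral_le_integral_abs).trans (setIntegral_mono_on hf.integrableOn.abs hg hs hfg)
  have hoff : |∫ x in sᶜ, f x ∂μ| ≤ M * μ.real sᶜ :=
    norm_setIntegral_le_of_norm_le_const (f := f) (measure_lt_top μ sᶜ) hfM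
  rw [← integral_add_compl hs hf]
  linarith [abs_add_le (∫ x in s, f x ∂μ) (∫ x in sᶜ, f x ∂μ)]

lemma sqrt_mul_rpow_three_halves {a x : ℝ} (ha : 0 ≤ a) (hx : 0 < x) :
    √a * x ^ ((3 : ℝ) / 2) = √(a * x) * x := by
  rw [show (3 : ℝ) / 2 = 1 + 1 / 2 by norm_num, rpow_add hx, rpow_one, ← sqrt_eq_rpow,
    sqrt_mul ha]
  ring

namespace ProbabilityTheory

lemma IndepFun.measureReal_mem_eq_integral {Ω α β : Type*} [MeasurableSpace Ω]
    [MeasurableSpace α] [MeasurableSpace β] {P : Measure Ω} [IsFiniteMeasure P]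
    {X : Ω → α} {Y : Ω → β} (hXY : IndepFun X Y P) (hX : Measurable X) (hY : Measurable Y)
    {s : Set (α × β)} (hs : MeasurableSet s) :
    P.real {ω | (X ω, Y ω) ∈ s} = ∫ ω, (P.map X).real {x | (x, Y ω) ∈ s} ∂P := by
  have hmeas : Measurable fun y ↦ P.map X {x | (x, y) ∈ s} :=
    measurable_measure_prodMk_right hs
  have h : P {ω | (X ω, Y ω) ∈ s} = ∫⁻ ω, P.map X {x | (x, Y ω) ∈ s} ∂P := by
    change P ((fun ω ↦ (X ω, Y ω)) ⁻¹' s) = _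
    rw [← Measure.map_apply (hX.prodMk hY) hs,
      hXY.map_prod_eq_prod_map_map hX.aemeasurable hY.aemeasurable,
      Measure.prod_apply_symm hs]
    exact lintegral_map hmeas hY
  rw [measureReal_def, h]
  exact (integral_toReal (hmeas.comp hY).aemeasurable
    (ae_of_all _ fun _ ↦ measure_lt_top _ _)).symm

lemma IndepFun.abs_measureReal_smallBall_add_sub_le {Ω : Type*} [MeasurableSpace Ω]
    {P : Measure Ω} [IsProbabilityMeasure P] {X J : Ω → ℝ} (hXJ : IndepFun X J P)
    (hX : Measurable X) (hJ : Measurable J) {ε δ a M K : ℝ} (hε : 0 ≤ ε)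
    (hlarge : ∀ j, δ ≤ |j| → |(P.map X).real {x | |x + j| ≤ ε} - a| ≤ M)
    (hsmall : ∀ j, |j| < δ → |(P.map X).real {x | |x + j| ≤ ε} - a| ≤ K * (|j| + ε) ^ 2) :
    |(P {ω | |X ω + J ω| ≤ ε}).toReal - a| ≤ M * (P {ω | δ ≤ |J ω|}).toReal +
      K * ∫ ω, {ω | |J ω| < δ}.indicator (fun ω ↦ (|J ω| + ε) ^ 2) ω ∂P := by
  set G : ℝ → ℝ := fun j ↦ (P.map X).real {x | |x + j| ≤ ε}
  have hball : MeasurableSet {p : ℝ × ℝ | |p.1 + p.2| ≤ ε} :=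
    measurableSet_le (by fun_prop) measurable_const
  have hprob : (P {ω | |X ω + J ω| ≤ ε}).toReal = ∫ ω, G (J ω) ∂P :=
    hXJ.measureReal_mem_eq_integral hX hJ hball
  have hG : Integrable (fun ω ↦ G (J ω)) P := by
    refine .of_bound ?_ 1 (ae_of_all _ fun ω ↦ ?_)
    · exact ((measurable_measure_prodMk_right hball).ennreal_toReal.comp hJ).aestronglyMeasurable
    · simp only [G, Real.norm_of_nonneg measureReal_nonneg, measureReal_le_one]
  set s := {ω | |J ω| < δ}
  have hs : MeasurableSet s := measurableSet_lt (by fun_prop) measurable_const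
  have hsc : sᶜ = {ω | δ ≤ |J ω|} := by ext; simp [s]
  have hsq : IntegrableOn (fun ω ↦ (|J ω| + ε) ^ 2) s P :=
    Measure.integrableOn_of_bounded (M := (δ + ε) ^ 2) (measure_ne_top _ _) (by fun_prop)
      (ae_restrict_of_forall_mem hs fun ω (hω : |J ω| < δ) ↦ by
        rw [Real.norm_of_nonneg (by positivity)]; gcongr)
  have h := abs_integral_le_mul_measureReal_compl_add_setIntegral
    (f := fun ω ↦ G (J ω) - a) hs (hG.sub (integrable_const a)) (hsq.const_mul K)
    (fun ω hω ↦ hsmall (J ω) hω) (fun ω hω ↦ hlarge (J ω) (by simpa [s] using hω))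
  rwa [integral_sub hG (integrable_const a), integral_const, probReal_univ, one_smul,
    ← hprob, integral_const_mul, ← integral_indicator hs, hsc] at h

lemma gaussianPDFReal_zero_zero (v : NNReal) : gaussianPDFReal 0 v 0 = (√(2 * π * v))⁻¹ := by
  simp [gaussianPDFReal]

lemma abs_gaussianPDFReal_sub_peak_le (v : NNReal) (x : ℝ) :
    |gaussianPDFReal 0 v x - gaussianPDFReal 0 v 0|
      ≤ gaussianPDFReal 0 v 0 * min 1 (x ^ 2 / (2 * v)) := by
  have hpeak : 0 ≤ gaussianPDFReal 0 v 0 := gaussianPDFReal_nonneg _ _ _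
  have hexp_le : rexp (-(x ^ 2 / (2 * v))) ≤ 1 := exp_le_one_iff.2 (by simp; positivity)
  have hlin : 1 - rexp (-(x ^ 2 / (2 * v))) ≤ x ^ 2 / (2 * v) := by
    linarith [add_one_le_exp (-(x ^ 2 / (2 * v)))]
  have hrepr : gaussianPDFReal 0 v x - gaussianPDFReal 0 v 0
      = -(gaussianPDFReal 0 v 0 * (1 - rexp (-(x ^ 2 / (2 * v))))) := by
    simp [gaussianPDFReal, neg_div]; ring
  rw [hrepr, abs_neg, abs_of_nonneg (by nlinarith)]
  gcongr
  exact le_min (by linarith [exp_pos (-(x ^ 2 / (2 * v)))]) hlin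

lemma abs_gaussianReal_real_Icc_sub_le {v : NNReal} (hv : v ≠ 0) {a b R : ℝ} (hab : a ≤ b)
    (hR : ∀ x ∈ Icc a b, |x| ≤ R) :
    |(gaussianReal 0 v).real (Icc a b) - (b - a) * gaussianPDFReal 0 v 0|
      ≤ gaussianPDFReal 0 v 0 * min 1 (R ^ 2 / (2 * v)) * (b - a) := by
  have hreal : (gaussianReal 0 v).real (Icc a b) = ∫ x in Icc a b, gaussianPDFReal 0 v x := by
    rw [measureReal_def, gaussianReal_apply_eq_integral 0 hv, ENNReal.toReal_ofReal
      (setIntegral_nonneg measurableSet_Icc fun x _ ↦ gaussianPDFReal_nonneg _ _ _)]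
  have hconst : (b - a) * gaussianPDFReal 0 v 0 = ∫ _ in Icc a b, gaussianPDFReal 0 v 0 := by
    rw [setIntegral_const, volume_real_Icc_of_le hab, smul_eq_mul]
  rw [hreal, hconst, ← volume_real_Icc_of_le hab,
    ← integral_sub (integrable_gaussianPDFReal 0 v).integrableOn
      (integrableOn_const (measure_Icc_lt_top (μ := (volume : Measure ℝ))).ne)]
  have hpointwise : ∀ x ∈ Icc a b, ‖gaussianPDFReal 0 v x - gaussianPDFReal 0 v 0‖
      ≤ gaussianPDFReal 0 v 0 * min 1 (R ^ 2 / (2 * v)) := fun x hx ↦ by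
    have hx2 : x ^ 2 ≤ R ^ 2 := sq_le_sq' (abs_le.1 (hR x hx)).1 (abs_le.1 (hR x hx)).2
    refine (abs_gaussianPDFReal_sub_peak_le v x).trans ?_
    have := gaussianPDFReal_nonneg 0 v 0
    gcongr
  exact norm_setIntegral_le_of_norm_le_const measure_Icc_lt_top hpointwise

lemma abs_gaussianReal_real_smallBall_sub_le {v : NNReal} (hv : v ≠ 0) {ε : ℝ} (hε : 0 ≤ ε)
    (j : ℝ) :
    |(gaussianReal 0 v).real {x | |x + j| ≤ ε} - 2 * ε * gaussianPDFReal 0 v 0|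
      ≤ 2 * ε * gaussianPDFReal 0 v 0 * min 1 ((|j| + ε) ^ 2 / (2 * v)) := by
  have hball : {x | |x + j| ≤ ε} = Icc (-j - ε) (-j + ε) := by
    ext x
    simp only [mem_ofPred_eq, mem_Icc, abs_le]
    constructor <;> rintro ⟨h₁, h₂⟩ <;> constructor <;> linarith
  have hbound : ∀ x ∈ Icc (-j - ε) (-j + ε), |x| ≤ |j| + ε := fun x hx ↦ by
    rw [abs_le]; constructor <;> linarith [hx.1, hx.2, neg_abs_le j, le_abs_self j]
  have h := abs_gaussianReal_real_Icc_sub_le hv (by linarith) hbound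
  rw [show -j + ε - (-j - ε) = 2 * ε by ring] at h
  rw [hball]
  linarith

lemma abs_gaussianReal_real_smallBall_sub_le_two_mul {v : NNReal} (hv : v ≠ 0) {ε : ℝ}
    (hε : 0 ≤ ε) (j : ℝ) :
    |(gaussianReal 0 v).real {x | |x + j| ≤ ε} - 2 * ε * gaussianPDFReal 0 v 0|
      ≤ 2 * ε * gaussianPDFReal 0 v 0 := by
  have := gaussianPDFReal_nonneg 0 v 0
  refine (abs_gaussianReal_real_smallBall_sub_le hv hε j).trans ?_
  calc 2 * ε * gaussianPDFReal 0 v 0 * min 1 ((|j| + ε) ^ 2 / (2 * v))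
      ≤ 2 * ε * gaussianPDFReal 0 v 0 * 1 := by gcongr; exact min_le_left _ _
    _ = 2 * ε * gaussianPDFReal 0 v 0 := mul_one _

lemma abs_gaussianReal_real_smallBall_sub_le_sq {v : NNReal} (hv : v ≠ 0) {ε : ℝ}
    (hε : 0 ≤ ε) (j : ℝ) :
    |(gaussianReal 0 v).real {x | |x + j| ≤ ε} - 2 * ε * gaussianPDFReal 0 v 0|
      ≤ ε * gaussianPDFReal 0 v 0 / v * (|j| + ε) ^ 2 := by
  have := gaussianPDFReal_nonneg 0 v 0
  refine (abs_gaussianReal_real_smallBall_sub_le hv hε j).trans ?_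
  calc 2 * ε * gaussianPDFReal 0 v 0 * min 1 ((|j| + ε) ^ 2 / (2 * v))
      ≤ 2 * ε * gaussianPDFReal 0 v 0 * ((|j| + ε) ^ 2 / (2 * v)) := by
        gcongr; exact min_le_right _ _
    _ = ε * gaussianPDFReal 0 v 0 / v * (|j| + ε) ^ 2 := by field_simp

end ProbabilityTheory

theorem jump_diffusion_smallball_expansion_general (v : NNReal) (hv : 0 < v)
    {Ω : Type*} [MeasurableSpace Ω] (P : Measure Ω) [IsProbabilityMeasure P]
    (X J : Ω → ℝ) (hX : Measurable X) (hJ : Measurable J)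
    (hXlaw : Measure.map X P = gaussianReal 0 v)
    (hindep : IndepFun X J P) (ε δ : ℝ) (hε : 0 ≤ ε) :
    |(P {ω | |X ω + J ω| ≤ ε}).toReal - 2 * ε / Real.sqrt (2 * Real.pi * (v : ℝ))| ≤
      (4 * ε / Real.sqrt (2 * Real.pi * (v : ℝ))) * (P {ω | δ ≤ |J ω|}).toReal +
        (ε / (Real.sqrt (2 * Real.pi) * (v : ℝ) ^ ((3 : ℝ) / 2))) *
          ∫ ω, Set.indicator {ω | |J ω| < δ} (fun ω => (|J ω| + ε) ^ 2) ω ∂P := by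
  have hpeak : 0 ≤ gaussianPDFReal 0 v 0 := gaussianPDFReal_nonneg 0 v 0
  have key := hindep.abs_measureReal_smallBall_add_sub_le hX hJ hε (δ := δ)
    (M := 4 * ε * gaussianPDFReal 0 v 0)
    (fun j _ ↦ hXlaw ▸ (abs_gaussianReal_real_smallBall_sub_le_two_mul hv.ne' hε j).trans
      (by nlinarith))
    (fun j _ ↦ hXlaw ▸ abs_gaussianReal_real_smallBall_sub_le_sq hv.ne' hε j)
  rw [sqrt_mul_rpow_three_halves (by positivity) (by exact_mod_cast hv)]
  simp only [gaussianPDFReal_zero_zero] at key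
  convert key using 3 <;> field_simp

/-- Quantitative constant-volatility version of Lemma 2: if `X` is centered Gaussian with
variance `v > 0` and `J` is independent of `X`, then for `ε ≥ 0` and `δ > 0`,
`|P(|X+J| ≤ ε) − 2ε/√(2πv)|
  ≤ (4ε/√(2πv))·P(|J| ≥ δ) + (ε/(√(2π) v^{3/2}))·E[(|J|+ε)²·1_{|J|<δ}]`. -/
theorem jump_diffusion_smallball_expansion (v : NNReal) (hv : 0 < v)
    {Ω : Type*} [MeasurableSpace Ω] (P : Measure Ω) [IsProbabilityMeasure P]
    (X J : Ω → ℝ) (hX : Measurable X) (hJ : Measurable J)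
    (hXlaw : Measure.map X P = gaussianReal 0 v)
    (hindep : IndepFun X J P) (ε δ : ℝ) (hε : 0 ≤ ε) (hδ : 0 < δ) :
    |(P {ω | |X ω + J ω| ≤ ε}).toReal - 2 * ε / Real.sqrt (2 * Real.pi * (v : ℝ))| ≤
      (4 * ε / Real.sqrt (2 * Real.pi * (v : ℝ))) * (P {ω | δ ≤ |J ω|}).toReal +
        (ε / (Real.sqrt (2 * Real.pi) * (v : ℝ) ^ ((3 : ℝ) / 2))) *
          ∫ ω, Set.indicator {ω | |J ω| < δ} (fun ω => (|J ω| + ε) ^ 2) ω ∂P :=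
  jump_diffusion_smallball_expansion_general v hv P X J hX hJ hXlaw hindep ε δ hε
end

section
/- Fix β ∈ (0,2), θ ∈ ℝ, γ > 0, a⁺ > 0, a⁻ > 0, ε⁺ > 0, ε⁻ > 0, L ≥ 0, and a measurable f : ℝ → ℝ with |f(x)| ≤ L for all x; let F′(x) = |x|^{−1−β}(1 + |x|^γ f(x))·(a⁺·1_{0<x≤ε⁺} + a⁻·1_{−ε⁻≤x<0}) and ν̃(z) = |z|^{−1−β}(a⁺·1_{z>0} + a⁻·1_{z<0}). Then, as Δ → 0⁺, ∫_ℝ (exp(iθz) − 1 − iθz·1_{|z|≤1})·Δ^{1+1/β} F′(Δ^{1/β} z) dz converges to ∫_ℝ (exp(iθz) − 1 − iθz·1_{|z|≤1})·ν̃(z) dz. (Dominated-convergence limit of the compensated characteristic exponent, the key step (char) in the proof of Lemma 4 showing convergence to a stable law.) -/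
/-!
Substituting `x = Δ^{1/β} z`, the self-similarity `c^{1+β} |c z|^{-(1+β)} = |z|^{-(1+β)}` turns
the rescaled density into `|z|^{-(1+β)} h(Δ^{1/β} z)`, where `h(x) = (1 + |x|^γ f(x))·(cutoff)` is
bounded and tends to `a⁺` (resp. `a⁻`) as `x → 0` from the right (resp. left). The compensated
exponential is `O(min(z², 1))`, and `min(z², 1) |z|^{-(1+β)}` is integrable exactly because
`0 < β < 2`, so dominated convergence applies.
-/

open MeasureTheory Filter Set Topology

theorem norm_exp_I_mul_ofReal_sub_one_sub_le (x : ℝ) :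
    ‖Complex.exp (Complex.I * x) - 1 - Complex.I * x‖ ≤ 2 * x ^ 2 := by
  have hIx : ‖Complex.I * x‖ = |x| := by simp
  rcases le_or_gt |x| 1 with hx | hx
  · calc ‖Complex.exp (Complex.I * x) - 1 - Complex.I * x‖ ≤ ‖Complex.I * x‖ ^ 2 :=
          Complex.norm_exp_sub_one_sub_id_le (hIx ▸ hx)
      _ ≤ 2 * x ^ 2 := by rw [hIx, sq_abs]; nlinarith [sq_nonneg x]
  · calc ‖Complex.exp (Complex.I * x) - 1 - Complex.I * x‖
          ≤ ‖Complex.exp (Complex.I * x) - 1‖ + ‖Complex.I * x‖ := norm_sub_le _ _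
      _ ≤ |x| + |x| := by
          rw [hIx]; gcongr; simpa using Real.norm_exp_I_mul_ofReal_sub_one_le (x := x)
      _ ≤ 2 * x ^ 2 := by nlinarith [sq_abs x]

noncomputable def compensatedExp (θ z : ℝ) : ℂ :=
  Complex.exp (Complex.I * θ * z) - 1 - Complex.I * θ * z * (if |z| ≤ 1 then 1 else 0)

theorem measurable_compensatedExp (θ : ℝ) : Measurable (compensatedExp θ) := by
  refine .sub (by fun_prop) (.mul (by fun_prop) ?_)
  exact Measurable.ite (measurableSet_le measurable_abs measurable_const) measurable_const
    measurable_const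

theorem norm_compensatedExp_le (θ z : ℝ) :
    ‖compensatedExp θ z‖ ≤ 2 * (θ ^ 2 + 1) * min (z ^ 2) 1 := by
  have hexp : ‖Complex.exp (Complex.I * θ * z)‖ = 1 := by
    rw [mul_assoc, ← Complex.ofReal_mul, mul_comm, Complex.norm_exp_ofReal_mul_I]
  rcases le_or_gt |z| 1 with hz | hz
  · have hz2 : z ^ 2 ≤ 1 := by nlinarith [sq_abs z, abs_nonneg z]
    have := norm_exp_I_mul_ofReal_sub_one_sub_le (θ * z)
    rw [Complex.ofReal_mul, ← mul_assoc] at this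
    simp only [compensatedExp, if_pos hz, mul_one, min_eq_left hz2]
    nlinarith [sq_nonneg z]
  · simp only [compensatedExp, if_neg hz.not_ge, mul_zero, sub_zero,
      min_eq_right (by nlinarith [sq_abs z] : (1:ℝ) ≤ z ^ 2)]
    calc ‖Complex.exp (Complex.I * θ * z) - 1‖ ≤ ‖Complex.exp (Complex.I * θ * z)‖ + ‖(1:ℂ)‖ :=
          norm_sub_le _ _
      _ ≤ 2 * (θ ^ 2 + 1) * 1 := by rw [hexp, norm_one]; nlinarith [sq_nonneg θ]

theorem integrable_min_sq_one_mul_abs_rpow {β : ℝ} (hβ0 : 0 < β) (hβ2 : β < 2) :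
    Integrable fun z : ℝ => min (z ^ 2) 1 * |z| ^ (-(1 + β)) := by
  set φ : ℝ → ℝ := fun z => min (z ^ 2) 1 * |z| ^ (-(1 + β))
  have hsmall : IntegrableOn φ (Ioc 0 1) := by
    refine ((intervalIntegral.integrableOn_Ioo_rpow_iff one_pos).2 (by linarith :
      -1 < 1 - β)).congr_set_ae Ioo_ae_eq_Ioc.symm |>.congr_fun (fun z hz => ?_) measurableSet_Ioc
    have hz2 : z ^ 2 ≤ 1 := by nlinarith [hz.1, hz.2]
    simp only [φ, min_eq_left hz2, abs_of_pos hz.1]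
    rw [← Real.rpow_natCast, ← Real.rpow_add hz.1]
    congr 1
    push_cast
    ring
  have hlarge : IntegrableOn φ (Ioi 1) := by
    refine (integrableOn_Ioi_rpow_of_lt (by linarith : -(1 + β) < -1) one_pos).congr_fun
      (fun z (hz : 1 < z) => ?_) measurableSet_Ioi
    simp only [φ, min_eq_right (by nlinarith : (1:ℝ) ≤ z ^ 2), abs_of_pos (one_pos.trans hz),
      one_mul]
  have hpos : IntegrableOn φ (Ioi 0) := by
    rw [← Ioc_union_Ioi_eq_Ioi zero_le_one]
    exact hsmall.union hlarge
  have hneg : IntegrableOn φ (Iio 0) := by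
    have hφ : ∀ z, φ (-z) = φ z := fun z => by simp only [φ, neg_sq, abs_neg]
    have := IntegrableOn.comp_neg_Iio (μ := volume) (c := (0:ℝ)) (f := φ) (by rwa [neg_zero])
    simpa only [hφ] using this
  rw [← integrableOn_univ, ← Iio_union_Ici (a := (0:ℝ)), integrableOn_union,
    integrableOn_Ici_iff_integrableOn_Ioi]
  exact ⟨hneg, hpos⟩

theorem tendsto_integral_compensatedExp_mul_abs_rpow {ι : Type*} {l : Filter ι}
    [l.IsCountablyGenerated] {β : ℝ} (hβ0 : 0 < β) (hβ2 : β < 2) (θ : ℝ)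
    {H : ι → ℝ → ℝ} {H₀ : ℝ → ℝ} {C : ℝ}
    (hmeas : ∀ᶠ i in l, AEStronglyMeasurable (H i))
    (hbound : ∀ᶠ i in l, ∀ z, |H i z| ≤ C)
    (hlim : ∀ᵐ z, Tendsto (fun i => H i z) l (𝓝 (H₀ z))) :
    Tendsto (fun i => ∫ z, compensatedExp θ z * ((|z| ^ (-(1 + β)) * H i z : ℝ) : ℂ)) l
      (𝓝 (∫ z, compensatedExp θ z * ((|z| ^ (-(1 + β)) * H₀ z : ℝ) : ℂ))) := by
  refine tendsto_integral_filter_of_dominated_convergence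
    (fun z => 2 * (θ ^ 2 + 1) * C * (min (z ^ 2) 1 * |z| ^ (-(1 + β)))) ?_ ?_
    ((integrable_min_sq_one_mul_abs_rpow hβ0 hβ2).const_mul _) ?_
  · filter_upwards [hmeas] with i hi
    exact (measurable_compensatedExp θ).aestronglyMeasurable.mul
      (Complex.continuous_ofReal.comp_aestronglyMeasurable
        ((Measurable.aestronglyMeasurable (by fun_prop)).mul hi))
  · filter_upwards [hbound] with i hi
    refine ae_of_all _ fun z => ?_
    have hg := norm_compensatedExp_le θ z
    have hpow : 0 ≤ |z| ^ (-(1 + β)) := by positivity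
    rw [norm_mul, Complex.norm_real, Real.norm_eq_abs, abs_mul, abs_of_nonneg hpow]
    calc ‖compensatedExp θ z‖ * (|z| ^ (-(1 + β)) * |H i z|)
        ≤ 2 * (θ ^ 2 + 1) * min (z ^ 2) 1 * (|z| ^ (-(1 + β)) * C) := by gcongr; exact hi z
      _ = _ := by ring
  · filter_upwards [hlim] with z hz
    exact tendsto_const_nhds.mul
      (Complex.continuous_ofReal.continuousAt.tendsto.comp (hz.const_mul _))

theorem rpow_mul_abs_mul_rpow_neg {c : ℝ} (hc : 0 < c) (s z : ℝ) :
    c ^ s * |c * z| ^ (-s) = |z| ^ (-s) := by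
  rw [abs_mul, abs_of_pos hc, Real.mul_rpow hc.le (abs_nonneg z), ← mul_assoc,
    ← Real.rpow_add hc, add_neg_cancel, Real.rpow_zero, one_mul]

theorem rpow_one_add_inv {Δ β : ℝ} (hΔ : 0 ≤ Δ) (hβ : β ≠ 0) :
    Δ ^ (1 + 1 / β) = (Δ ^ (1 / β)) ^ (1 + β) := by
  rw [← Real.rpow_mul hΔ]
  congr 1
  field_simp
  ring

theorem tendsto_rpow_mul_nhds_zero {p : ℝ} (hp : 0 < p) (z : ℝ) :
    Tendsto (fun Δ : ℝ => Δ ^ p * z) (𝓝[>] 0) (𝓝 0) := by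
  simpa [Real.zero_rpow hp.ne'] using
    ((Real.continuousAt_rpow_const 0 p (Or.inr hp.le)).tendsto.mono_left
      nhdsWithin_le_nhds).mul_const z

theorem tendsto_rpow_mul_nhdsGT_zero {p z : ℝ} (hp : 0 < p) (hz : 0 < z) :
    Tendsto (fun Δ : ℝ => Δ ^ p * z) (𝓝[>] 0) (𝓝[>] 0) :=
  tendsto_nhdsWithin_iff.2 ⟨tendsto_rpow_mul_nhds_zero hp z,
    eventually_mem_nhdsWithin.mono fun Δ (hΔ : 0 < Δ) => mul_pos (Real.rpow_pos_of_pos hΔ p) hz⟩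

theorem tendsto_rpow_mul_nhdsLT_zero {p z : ℝ} (hp : 0 < p) (hz : z < 0) :
    Tendsto (fun Δ : ℝ => Δ ^ p * z) (𝓝[>] 0) (𝓝[<] 0) :=
  tendsto_nhdsWithin_iff.2 ⟨tendsto_rpow_mul_nhds_zero hp z,
    eventually_mem_nhdsWithin.mono fun Δ (hΔ : 0 < Δ) =>
      mul_neg_of_pos_of_neg (Real.rpow_pos_of_pos hΔ p) hz⟩

theorem tendsto_one_add_abs_rpow_mul {γ L : ℝ} (hγ : 0 < γ) {f : ℝ → ℝ}
    (hfb : ∀ x, |f x| ≤ L) : Tendsto (fun x => 1 + |x| ^ γ * f x) (𝓝 0) (𝓝 1) := by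
  have hpow : Tendsto (fun x : ℝ => |x| ^ γ) (𝓝 0) (𝓝 0) := by
    simpa [Function.comp_def, Real.zero_rpow hγ.ne'] using
      (Real.continuousAt_rpow_const 0 γ (Or.inr hγ.le)).tendsto.comp
        (continuous_abs.tendsto' 0 0 abs_zero)
  simpa using tendsto_const_nhds.add
    (hpow.zero_mul_isBoundedUnder_le (isBoundedUnder_of ⟨L, fun x => hfb x⟩))

theorem abs_one_add_abs_rpow_mul_le {γ L M : ℝ} (hγ : 0 ≤ γ) {f : ℝ → ℝ}
    (hfb : ∀ x, |f x| ≤ L) {x : ℝ} (hx : |x| ≤ M) : |1 + |x| ^ γ * f x| ≤ 1 + L * M ^ γ := by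
  have hpow₀ : 0 ≤ |x| ^ γ := by positivity
  have hpow : |x| ^ γ ≤ M ^ γ := Real.rpow_le_rpow (abs_nonneg x) hx hγ
  calc |1 + |x| ^ γ * f x| ≤ 1 + |x| ^ γ * |f x| := by
        simpa only [abs_one, abs_mul, abs_of_nonneg hpow₀] using abs_add_le 1 (|x| ^ γ * f x)
    _ ≤ 1 + L * M ^ γ := by
        rw [mul_comm L]
        gcongr
        exacts [hpow₀.trans hpow, hfb x]

noncomputable def twoSidedCutoff (apos aneg εpos εneg x : ℝ) : ℝ :=
  (if 0 < x ∧ x ≤ εpos then apos else 0) + (if -εneg ≤ x ∧ x < 0 then aneg else 0)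

section twoSidedCutoff

variable {apos aneg εpos εneg : ℝ}

theorem measurable_twoSidedCutoff : Measurable (twoSidedCutoff apos aneg εpos εneg) :=
  (Measurable.ite measurableSet_Ioc measurable_const measurable_const).add
    (Measurable.ite measurableSet_Ico measurable_const measurable_const)

theorem twoSidedCutoff_eventuallyEq_nhdsGT (hεpos : 0 < εpos) :
    twoSidedCutoff apos aneg εpos εneg =ᶠ[𝓝[>] 0] fun _ => apos := by
  filter_upwards [Ioo_mem_nhdsGT hεpos] with x hx
  simp [twoSidedCutoff, hx.1, hx.2.le, hx.1.not_gt]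

theorem twoSidedCutoff_eventuallyEq_nhdsLT (hεneg : 0 < εneg) :
    twoSidedCutoff apos aneg εpos εneg =ᶠ[𝓝[<] 0] fun _ => aneg := by
  filter_upwards [Ioo_mem_nhdsLT (neg_lt_zero.2 hεneg)] with x hx
  simp [twoSidedCutoff, hx.1.le, hx.2, hx.2.not_gt]

theorem abs_mul_twoSidedCutoff_le {u : ℝ → ℝ} {B : ℝ} (hB : 0 ≤ B)
    (hu : ∀ x, |x| ≤ max εpos εneg → |u x| ≤ B) (hapos : 0 ≤ apos) (haneg : 0 ≤ aneg)
    (x : ℝ) : |u x * twoSidedCutoff apos aneg εpos εneg x| ≤ B * (apos + aneg) := by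
  by_cases hx : |x| ≤ max εpos εneg
  · have hS : 0 ≤ twoSidedCutoff apos aneg εpos εneg x ∧
        twoSidedCutoff apos aneg εpos εneg x ≤ apos + aneg := by
      unfold twoSidedCutoff; constructor <;> split_ifs <;> linarith
    rw [abs_mul, abs_of_nonneg hS.1]
    exact mul_le_mul (hu x hx) hS.2 hS.1 hB
  · have hS : twoSidedCutoff apos aneg εpos εneg x = 0 := by
      rw [not_le, lt_abs, max_lt_iff, max_lt_iff] at hx
      unfold twoSidedCutoff
      split_ifs <;> first | (exfalso; rcases hx with hx | hx <;> linarith) | simp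
    rw [hS, mul_zero, abs_zero]
    positivity

end twoSidedCutoff

theorem tendsto_comp_rpow_mul {h : ℝ → ℝ} {a b p : ℝ} (hp : 0 < p)
    (ha : Tendsto h (𝓝[>] 0) (𝓝 a)) (hb : Tendsto h (𝓝[<] 0) (𝓝 b)) {z : ℝ} (hz : z ≠ 0) :
    Tendsto (fun Δ : ℝ => h (Δ ^ p * z)) (𝓝[>] 0)
      (𝓝 ((if 0 < z then a else 0) + (if z < 0 then b else 0))) := by
  rcases hz.lt_or_gt with hz | hz
  · simpa [Function.comp_def, hz, hz.not_gt] using hb.comp (tendsto_rpow_mul_nhdsLT_zero hp hz)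
  · simpa [Function.comp_def, hz, hz.not_gt] using ha.comp (tendsto_rpow_mul_nhdsGT_zero hp hz)

/-- Dominated-convergence limit of the compensated characteristic exponent (step (char)
in the proof of Lemma 4): as `Δ → 0⁺`,
`∫ (e^{iθz} − 1 − iθz·1_{|z|≤1})·Δ^{1+1/β} F′(Δ^{1/β} z) dz →
  ∫ (e^{iθz} − 1 − iθz·1_{|z|≤1})·ν̃(z) dz`. -/
theorem stable_characteristic_exponent_limit
    (β θ γ apos aneg εpos εneg L : ℝ)
    (hβ : β ∈ Set.Ioo (0 : ℝ) 2) (hγ : 0 < γ)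
    (hapos : 0 < apos) (haneg : 0 < aneg)
    (hεpos : 0 < εpos) (hεneg : 0 < εneg) (hL : 0 ≤ L)
    (f : ℝ → ℝ) (hf : Measurable f) (hfb : ∀ x, |f x| ≤ L)
    (F' : ℝ → ℝ)
    (hF' : ∀ x, F' x = |x| ^ (-(1 + β)) * (1 + |x| ^ γ * f x) *
        ((if 0 < x ∧ x ≤ εpos then apos else 0) +
          (if -εneg ≤ x ∧ x < 0 then aneg else 0)))
    (ν : ℝ → ℝ)
    (hν : ∀ z, ν z = |z| ^ (-(1 + β)) *
        ((if 0 < z then apos else 0) + (if z < 0 then aneg else 0))) :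
    Tendsto (fun Δ : ℝ => ∫ z : ℝ,
        (Complex.exp (Complex.I * θ * z) - 1 -
            Complex.I * θ * z * (if |z| ≤ 1 then 1 else 0)) *
          ((Δ ^ (1 + 1 / β) * F' (Δ ^ (1 / β) * z) : ℝ) : ℂ))
      (nhdsWithin 0 (Set.Ioi 0))
      (nhds (∫ z : ℝ,
        (Complex.exp (Complex.I * θ * z) - 1 -
            Complex.I * θ * z * (if |z| ≤ 1 then 1 else 0)) * ((ν z : ℝ) : ℂ))) := by
  obtain ⟨hβ0, hβ2⟩ := hβ
  set h : ℝ → ℝ := fun x => (1 + |x| ^ γ * f x) * twoSidedCutoff apos aneg εpos εneg x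
  have hrescale : ∀ Δ : ℝ, 0 < Δ → ∀ z,
      Δ ^ (1 + 1 / β) * F' (Δ ^ (1 / β) * z) = |z| ^ (-(1 + β)) * h (Δ ^ (1 / β) * z) := by
    intro Δ hΔ z
    rw [hF', rpow_one_add_inv hΔ.le hβ0.ne', ← rpow_mul_abs_mul_rpow_neg
      (Real.rpow_pos_of_pos hΔ (1 / β)) (1 + β) z]
    simp only [h, twoSidedCutoff]
    ring
  have hbound : ∀ x, |h x| ≤ (1 + L * max εpos εneg ^ γ) * (apos + aneg) :=
    abs_mul_twoSidedCutoff_le (by positivity) (fun x => abs_one_add_abs_rpow_mul_le hγ.le hfb)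
      hapos.le haneg.le
  have hlimGT : Tendsto h (𝓝[>] 0) (𝓝 apos) := by
    simpa using ((tendsto_one_add_abs_rpow_mul hγ hfb).mono_left nhdsWithin_le_nhds).mul
      (tendsto_const_nhds.congr' (twoSidedCutoff_eventuallyEq_nhdsGT hεpos).symm)
  have hlimLT : Tendsto h (𝓝[<] 0) (𝓝 aneg) := by
    simpa using ((tendsto_one_add_abs_rpow_mul hγ hfb).mono_left nhdsWithin_le_nhds).mul
      (tendsto_const_nhds.congr' (twoSidedCutoff_eventuallyEq_nhdsLT hεneg).symm)
  have hmeas : Measurable h :=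
    (by fun_prop : Measurable fun x => 1 + |x| ^ γ * f x).mul measurable_twoSidedCutoff
  have hconv := tendsto_integral_compensatedExp_mul_abs_rpow hβ0 hβ2 θ
    (H := fun Δ z => h (Δ ^ (1 / β) * z))
    (.of_forall fun Δ => (hmeas.comp (measurable_const_mul _)).aestronglyMeasurable)
    (.of_forall fun Δ z => hbound _)
    ((Measure.ae_ne volume 0).mono fun z hz => tendsto_comp_rpow_mul (by positivity)
      hlimGT hlimLT hz)
  simp only [← hν] at hconv
  refine hconv.congr' ?_
  filter_upwards [self_mem_nhdsWithin] with Δ (hΔ : 0 < Δ)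
  simp only [hrescale Δ hΔ, compensatedExp]
end

section
/- Fix β ∈ (1,2), γ > 0, a⁺ > 0, a⁻ > 0, ε⁺ > 0, ε⁻ > 0, L ≥ 0, and a measurable f : ℝ → ℝ with |f(x)| ≤ L for all x; let F′(x) = |x|^{−1−β}(1 + |x|^γ f(x))·(a⁺·1_{0<x≤ε⁺} + a⁻·1_{−ε⁻≤x<0}). Then, as Δ → 0⁺, the drift-correction integral ∫_{1 ≤ |z| ≤ Δ^{−1/β}} z · Δ^{1+1/β} F′(Δ^{1/β} z) dz converges to (a⁺ − a⁻)/(β − 1). (This is the convergence of the centering term in the Lévy–Khintchine computation (char) in the proof of Lemma 4, case β > 1.) -/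
open MeasureTheory Filter


private lemma rpow_tendsto_zero' {q : ℝ} (hq : 0 < q) :
    Tendsto (fun Δ : ℝ => Δ ^ q) (nhdsWithin 0 (Set.Ioi 0)) (nhds 0) := by
  have h1 : Tendsto (fun Δ : ℝ => ((Δ⁻¹) ^ q)⁻¹) (nhdsWithin 0 (Set.Ioi 0)) (nhds 0) :=
    tendsto_inv_atTop_zero.comp ((tendsto_rpow_atTop hq).comp tendsto_inv_nhdsGT_zero)
  refine h1.congr' ?_
  filter_upwards [self_mem_nhdsWithin] with Δ (hΔ : (0:ℝ) < Δ)
  rw [Real.inv_rpow hΔ.le, inv_inv]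

private lemma rpow_neg_tendsto_atTop' {q : ℝ} (hq : 0 < q) :
    Tendsto (fun Δ : ℝ => Δ ^ (-q)) (nhdsWithin 0 (Set.Ioi 0)) atTop := by
  have h1 : Tendsto (fun Δ : ℝ => (Δ⁻¹) ^ q) (nhdsWithin 0 (Set.Ioi 0)) atTop :=
    (tendsto_rpow_atTop hq).comp tendsto_inv_nhdsGT_zero
  refine h1.congr' ?_
  filter_upwards [self_mem_nhdsWithin] with Δ (hΔ : (0:ℝ) < Δ)
  rw [Real.inv_rpow hΔ.le, ← Real.rpow_neg hΔ.le]

set_option maxHeartbeats 2000000 in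
private lemma drift_compute
    (β γ apos aneg εpos εneg L : ℝ)
    (hβ1 : 1 < β) (hβ2 : β < 2) (hγ : 0 < γ)
    (hapos : 0 < apos) (haneg : 0 < aneg) (hL : 0 ≤ L)
    (f : ℝ → ℝ) (hf : Measurable f) (hfb : ∀ x, |f x| ≤ L)
    (F' : ℝ → ℝ)
    (hF' : ∀ x, F' x = |x| ^ (-(1 + β)) * (1 + |x| ^ γ * f x) *
        ((if 0 < x ∧ x ≤ εpos then apos else 0) +
          (if -εneg ≤ x ∧ x < 0 then aneg else 0)))
    (Δ : ℝ) (hΔ : 0 < Δ) (hΔ1 : Δ < 1)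
    (hbp : 1 ≤ min (Δ ^ (-(1/β))) (εpos * Δ ^ (-(1/β))))
    (hbm : 1 ≤ min (Δ ^ (-(1/β))) (εneg * Δ ^ (-(1/β)))) :
    |(∫ z in {z : ℝ | 1 ≤ |z| ∧ |z| ≤ Δ ^ (-(1 / β))},
        z * (Δ ^ (1 + 1 / β) * F' (Δ ^ (1 / β) * z)))
      - (apos * ((min (Δ ^ (-(1/β))) (εpos * Δ ^ (-(1/β)))) ^ (1-β) - 1) / (1-β)
         - aneg * ((min (Δ ^ (-(1/β))) (εneg * Δ ^ (-(1/β)))) ^ (1-β) - 1) / (1-β))|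
    ≤ 2 * L * (apos + aneg) / (max γ (β-1+γ/2) - β + 1)
        * Δ ^ ((γ + β - 1 - max γ (β-1+γ/2)) / β) := by
  have hβ0 : (0:ℝ) < β := by linarith
  have hβne : β ≠ 0 := ne_of_gt hβ0
  set s : ℝ := Δ ^ (1/β) with hsdef
  set M : ℝ := Δ ^ (-(1/β)) with hMdef
  set c : ℝ := max γ (β-1+γ/2) with hcdef
  have hs : 0 < s := Real.rpow_pos_of_pos hΔ _
  have hM : 0 < M := Real.rpow_pos_of_pos hΔ _
  have hMs : M = s⁻¹ := by rw [hMdef, hsdef, Real.rpow_neg hΔ.le]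
  have hsM1 : s * M = 1 := by rw [hMs, mul_inv_cancel₀ (ne_of_gt hs)]
  have hM1 : 1 ≤ M := le_trans hbp (min_le_left _ _)
  have hγc : γ ≤ c := le_max_left _ _
  have hc1 : -1 < c - β := by
    have : β - 1 + γ/2 ≤ c := le_max_right _ _
    linarith
  have hc2 : 0 < c - β + 1 := by linarith
  have hcγ : c < γ + β - 1 := max_lt (by linarith) (by linarith)
  set bp : ℝ := min M (εpos * M) with hbpdef
  set bm : ℝ := min M (εneg * M) with hbmdef
  set S : Set ℝ := {z : ℝ | 1 ≤ |z| ∧ |z| ≤ M} with hSdef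
  have hSm : MeasurableSet S :=
    (measurableSet_le measurable_const measurable_id.abs).inter
      (measurableSet_le measurable_id.abs measurable_const)
  have hSsub : S ⊆ Set.Icc (-M) M := fun z hz => abs_le.mp hz.2
  have hSfin : volume S < ⊤ :=
    lt_of_le_of_lt (measure_mono hSsub) (by rw [Real.volume_Icc]; exact ENNReal.ofReal_lt_top)
  haveI : IsFiniteMeasure (volume.restrict S) :=
    ⟨by rwa [Measure.restrict_apply_univ]⟩
  set P : ℝ → ℝ := fun z => if 0 < z ∧ z ≤ εpos * M then apos else 0 with hPdef
  set Q : ℝ → ℝ := fun z => if -(εneg * M) ≤ z ∧ z < 0 then aneg else 0 with hQdef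
  have hwpos : ∀ z : ℝ, 0 < z → z * |z| ^ (-(1+β)) = z ^ (-β) := by
    intro z hz
    rw [abs_of_pos hz, show -β = 1 + -(1+β) by ring, Real.rpow_add hz, Real.rpow_one]
  have hwneg : ∀ z : ℝ, z < 0 → z * |z| ^ (-(1+β)) = -((-z) ^ (-β)) := by
    intro z hz
    rw [abs_of_neg hz, show -β = 1 + -(1+β) by ring,
      Real.rpow_add (by linarith : (0:ℝ) < -z), Real.rpow_one]
    ring
  have hwabs : ∀ z : ℝ, 1 ≤ |z| → |z * |z| ^ (-(1+β))| = |z| ^ (-β) := by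
    intro z hz
    have h0 : (0:ℝ) < |z| := lt_of_lt_of_le one_pos hz
    rw [abs_mul, abs_of_nonneg (Real.rpow_nonneg (abs_nonneg z) _),
      show -β = 1 + -(1+β) by ring, Real.rpow_add h0, Real.rpow_one]
  have hkey : Δ ^ (1 + 1/β) * s ^ (-(1+β)) = 1 := by
    rw [hsdef, ← Real.rpow_mul hΔ.le, ← Real.rpow_add hΔ,
      show 1 + 1/β + 1/β * -(1+β) = 0 by field_simp; ring, Real.rpow_zero]
  have hrw : ∀ z ∈ S, z * (Δ ^ (1 + 1 / β) * F' (s * z))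
      = z * |z| ^ (-(1+β)) * ((1 + (s*|z|) ^ γ * f (s*z)) * (P z + Q z)) := by
    intro z hz
    have e1 : (0 < s * z) ↔ (0 < z) := by
      constructor
      · intro h; by_contra hc; push_neg at hc; nlinarith
      · intro h; exact mul_pos hs h
    have e4 : (s * z < 0) ↔ (z < 0) := by
      constructor
      · intro h; by_contra hc; push_neg at hc; nlinarith
      · intro h; exact mul_neg_of_pos_of_neg hs h
    have hεpM : εpos * M = εpos / s := by rw [hMs, div_eq_mul_inv]
    have hεmM : εneg * M = εneg / s := by rw [hMs, div_eq_mul_inv]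
    have e2 : (s * z ≤ εpos) ↔ (z ≤ εpos * M) := by
      rw [hεpM, le_div_iff₀ hs, mul_comm]
    have e3 : (-εneg ≤ s * z) ↔ (-(εneg * M) ≤ z) := by
      rw [hεmM, ← neg_div, div_le_iff₀ hs, mul_comm]
    have habs : |s * z| = s * |z| := by rw [abs_mul, abs_of_pos hs]
    rw [hF' (s*z), habs, Real.mul_rpow hs.le (abs_nonneg z), hPdef, hQdef]
    simp only [e1, e2, e3, e4]
    linear_combination (z * |z| ^ (-(1+β)) *
      ((1 + (s*|z|) ^ γ * f (s*z)) *
        ((if 0 < z ∧ z ≤ εpos * M then apos else 0) +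
          (if -(εneg * M) ≤ z ∧ z < 0 then aneg else 0)))) * hkey
  -- integrability helper
  have key : ∀ (h : ℝ → ℝ), Measurable h → ∀ C : ℝ, (∀ z ∈ S, |h z| ≤ C) →
      IntegrableOn h S volume := by
    intro h hm C hb
    refine ⟨hm.aestronglyMeasurable, HasFiniteIntegral.of_bounded (C := C) ?_⟩
    filter_upwards [ae_restrict_mem hSm] with z hz
    simpa [Real.norm_eq_abs] using hb z hz
  have hwm : Measurable (fun z : ℝ => z * |z| ^ (-(1+β))) :=
    measurable_id.mul (measurable_id.abs.pow measurable_const)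
  have hPm : Measurable P := by
    rw [hPdef]
    exact Measurable.ite (measurableSet_Ioc (a := (0:ℝ)) (b := εpos * M))
      measurable_const measurable_const
  have hQm : Measurable Q := by
    rw [hQdef]
    exact Measurable.ite (measurableSet_Ico (a := -(εneg * M)) (b := (0:ℝ)))
      measurable_const measurable_const
  have hPQb : ∀ z : ℝ, |P z + Q z| ≤ apos + aneg := by
    intro z
    rw [hPdef, hQdef]
    simp only
    split_ifs <;> (rw [abs_le]; constructor <;> linarith)
  have hwb : ∀ z ∈ S, |z * |z| ^ (-(1+β))| ≤ 1 := by
    intro z hz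
    rw [hwabs z hz.1]
    exact Real.rpow_le_one_of_one_le_of_nonpos hz.1 (by linarith)
  have hintP : IntegrableOn (fun z => z * |z| ^ (-(1+β)) * P z) S volume := by
    refine key _ (hwm.mul hPm) (1 * (apos + aneg)) ?_
    intro z hz
    rw [abs_mul]
    refine mul_le_mul (hwb z hz) ?_ (abs_nonneg _) zero_le_one
    rw [hPdef]; simp only
    split_ifs <;> (rw [abs_le]; constructor <;> linarith)
  have hintQ : IntegrableOn (fun z => z * |z| ^ (-(1+β)) * Q z) S volume := by
    refine key _ (hwm.mul hQm) (1 * (apos + aneg)) ?_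
    intro z hz
    rw [abs_mul]
    refine mul_le_mul (hwb z hz) ?_ (abs_nonneg _) zero_le_one
    rw [hQdef]; simp only
    split_ifs <;> (rw [abs_le]; constructor <;> linarith)
  -- the error term
  set E : ℝ → ℝ := fun z =>
    z * |z| ^ (-(1+β)) * ((s*|z|) ^ γ * (f (s*z) * (P z + Q z))) with hEdef
  have hEm : Measurable E := by
    rw [hEdef]
    exact hwm.mul (((measurable_const.mul measurable_id.abs).pow measurable_const).mul
      ((hf.comp (measurable_const.mul measurable_id)).mul (hPm.add hQm)))
  have hEb : ∀ z ∈ S, |E z| ≤ 1 * (1 * (L * (apos + aneg))) := by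
    intro z hz
    rw [hEdef]
    simp only
    rw [abs_mul]
    refine mul_le_mul (hwb z hz) ?_ (abs_nonneg _) zero_le_one
    rw [abs_mul]
    refine mul_le_mul ?_ ?_ (abs_nonneg _) zero_le_one
    · rw [abs_of_nonneg (Real.rpow_nonneg (by positivity) _)]
      refine Real.rpow_le_one (by positivity) ?_ hγ.le
      calc s * |z| ≤ s * M := by
            have := hz.2; nlinarith
        _ = 1 := hsM1
    · rw [abs_mul]
      exact mul_le_mul (hfb _) (hPQb z) (abs_nonneg _) hL
  have hintE : IntegrableOn E S volume := key _ hEm _ hEb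
  -- split the integral
  have hIsplit : (∫ z in S, z * (Δ ^ (1 + 1 / β) * F' (s * z)))
      = (∫ z in S, z * |z| ^ (-(1+β)) * P z) + (∫ z in S, z * |z| ^ (-(1+β)) * Q z)
        + (∫ z in S, E z) := by
    rw [setIntegral_congr_fun hSm hrw]
    rw [show (fun z => z * |z| ^ (-(1+β)) * ((1 + (s*|z|) ^ γ * f (s*z)) * (P z + Q z)))
        = fun z => (z * |z| ^ (-(1+β)) * P z + z * |z| ^ (-(1+β)) * Q z) + E z by
      funext z; rw [hEdef]; ring]
    calc (∫ z in S, (z * |z| ^ (-(1+β)) * P z + z * |z| ^ (-(1+β)) * Q z) + E z)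
        = (∫ z in S, z * |z| ^ (-(1+β)) * P z + z * |z| ^ (-(1+β)) * Q z)
          + ∫ z in S, E z := integral_add (hintP.add hintQ) hintE
      _ = _ := by rw [integral_add hintP hintQ]
  have hIP : (∫ z in S, z * |z| ^ (-(1+β)) * P z) = apos * (bp ^ (1-β) - 1) / (1-β) := by
    have hind : (fun z => z * |z| ^ (-(1+β)) * P z)
        = fun z => Set.indicator (Set.Ioc 0 (εpos * M))
            (fun z => z * |z| ^ (-(1+β)) * apos) z := by
      funext z
      rw [hPdef, Set.indicator_apply]
      simp only [Set.mem_Ioc]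
      split_ifs <;> ring
    rw [hind, integral_indicator measurableSet_Ioc,
      Measure.restrict_restrict measurableSet_Ioc]
    have hseteq : Set.Ioc 0 (εpos * M) ∩ S = Set.Icc 1 bp := by
      ext z
      simp only [Set.mem_inter_iff, Set.mem_Ioc, Set.mem_Icc, hSdef, Set.mem_setOf_eq, hbpdef,
        le_min_iff]
      constructor
      · rintro ⟨⟨h0, h1⟩, h2, h3⟩
        rw [abs_of_pos h0] at h2 h3
        exact ⟨h2, h3, h1⟩
      · rintro ⟨h1, h2, h3⟩
        have h0 : (0:ℝ) < z := lt_of_lt_of_le one_pos h1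
        rw [abs_of_pos h0]
        exact ⟨⟨h0, h3⟩, h1, h2⟩
    rw [hseteq, integral_Icc_eq_integral_Ioc, ← intervalIntegral.integral_of_le hbp]
    rw [intervalIntegral.integral_congr (g := fun z => apos * z ^ (-β))
      (by
        intro z hz
        rw [Set.uIcc_of_le hbp] at hz
        have h0 : (0:ℝ) < z := lt_of_lt_of_le one_pos hz.1
        simp only
        rw [hwpos z h0]; ring)]
    rw [intervalIntegral.integral_const_mul, integral_rpow (Or.inr ⟨by intro h; linarith,
      by rw [Set.uIcc_of_le hbp]; intro h; exact absurd h.1 (by norm_num)⟩)]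
    rw [Real.one_rpow, show -β + 1 = 1 - β by ring]
    ring
  have hIQ : (∫ z in S, z * |z| ^ (-(1+β)) * Q z)
      = -(aneg * (bm ^ (1-β) - 1) / (1-β)) := by
    have hind : (fun z => z * |z| ^ (-(1+β)) * Q z)
        = fun z => Set.indicator (Set.Ico (-(εneg * M)) 0)
            (fun z => z * |z| ^ (-(1+β)) * aneg) z := by
      funext z
      rw [hQdef, Set.indicator_apply]
      simp only [Set.mem_Ico]
      split_ifs <;> ring
    rw [hind, integral_indicator measurableSet_Ico,
      Measure.restrict_restrict measurableSet_Ico]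
    have hseteq : Set.Ico (-(εneg * M)) 0 ∩ S = Set.Icc (-bm) (-1) := by
      ext z
      simp only [Set.mem_inter_iff, Set.mem_Ico, Set.mem_Icc, hSdef, Set.mem_setOf_eq, hbmdef]
      constructor
      · rintro ⟨⟨h0, h1⟩, h2, h3⟩
        rw [abs_of_neg h1] at h2 h3
        have hzm : -z ≤ min M (εneg * M) := le_min h3 (neg_le.mp h0)
        exact ⟨neg_le.mpr hzm, by linarith⟩
      · rintro ⟨h1, h2⟩
        have hz0 : z < 0 := lt_of_le_of_lt h2 (by norm_num)
        have hm1 : min M (εneg * M) ≤ M := min_le_left _ _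
        have hm2 : min M (εneg * M) ≤ εneg * M := min_le_right _ _
        rw [abs_of_neg hz0]
        exact ⟨⟨by linarith, hz0⟩, by linarith, by linarith⟩
    rw [hseteq, integral_Icc_eq_integral_Ioc,
      ← intervalIntegral.integral_of_le (neg_le_neg hbm)]
    have hcomp : (∫ x in (-bm)..(-1:ℝ), x * |x| ^ (-(1+β)) * aneg)
        = ∫ x in (1:ℝ)..bm, (-x) * |(-x)| ^ (-(1+β)) * aneg := by
      rw [intervalIntegral.integral_comp_neg (fun z => z * |z| ^ (-(1+β)) * aneg)]
    rw [hcomp]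
    rw [intervalIntegral.integral_congr (g := fun z => -(aneg * z ^ (-β)))
      (by
        intro z hz
        rw [Set.uIcc_of_le hbm] at hz
        have h0 : (0:ℝ) < z := lt_of_lt_of_le one_pos hz.1
        simp only
        rw [hwneg (-z) (by linarith), neg_neg]
        ring)]
    rw [intervalIntegral.integral_neg, intervalIntegral.integral_const_mul,
      integral_rpow (Or.inr ⟨by intro h; linarith,
        by rw [Set.uIcc_of_le hbm]; intro h; exact absurd h.1 (by norm_num)⟩)]
    rw [Real.one_rpow, show -β + 1 = 1 - β by ring]
    ring
  have hKnn : (0:ℝ) ≤ L * (apos+aneg) * s^γ := by positivity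
  have herrb : ∀ z ∈ S, |E z| ≤ L * (apos+aneg) * s^γ * |z| ^ (c-β) := by
    intro z hz
    obtain ⟨hz1, hz2⟩ := hz
    have h0 : (0:ℝ) < |z| := lt_of_lt_of_le one_pos hz1
    rw [hEdef]
    simp only
    rw [abs_mul, hwabs z hz1, abs_mul,
      abs_of_nonneg (Real.rpow_nonneg (by positivity) γ), abs_mul]
    calc |z|^(-β) * ((s*|z|)^γ * (|f (s*z)| * |P z + Q z|))
        ≤ |z|^(-β) * ((s*|z|)^γ * (L * (apos+aneg))) := by
          refine mul_le_mul_of_nonneg_left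
            (mul_le_mul_of_nonneg_left ?_ (by positivity)) (by positivity)
          exact mul_le_mul (hfb _) (hPQb z) (abs_nonneg _) hL
      _ = L * (apos+aneg) * s^γ * (|z|^(-β) * |z|^γ) := by
          rw [Real.mul_rpow hs.le (abs_nonneg z)]; ring
      _ = L * (apos+aneg) * s^γ * |z|^(γ-β) := by
          rw [← Real.rpow_add h0, show -β + γ = γ - β by ring]
      _ ≤ L * (apos+aneg) * s^γ * |z|^(c-β) := by
          refine mul_le_mul_of_nonneg_left ?_ hKnn
          exact Real.rpow_le_rpow_of_exponent_le hz1 (by linarith)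
  have habs_meas : Measurable (fun z : ℝ => |z| ^ (c-β)) :=
    measurable_id.abs.pow measurable_const
  have habs_bdd : ∀ z ∈ S, |(|z| ^ (c-β))| ≤ max (M^(c-β)) 1 := by
    intro z hz
    rw [abs_of_nonneg (Real.rpow_nonneg (abs_nonneg z) _)]
    rcases le_or_gt 0 (c-β) with h | h
    · exact le_max_of_le_left (Real.rpow_le_rpow (abs_nonneg z) hz.2 h)
    · exact le_max_of_le_right (Real.rpow_le_one_of_one_le_of_nonpos hz.1 h.le)
  have habsint : IntegrableOn (fun z : ℝ => |z| ^ (c-β)) S volume :=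
    key _ habs_meas _ habs_bdd
  have hBint : IntegrableOn (fun z : ℝ => L*(apos+aneg)*s^γ * |z|^(c-β)) S volume :=
    habsint.const_mul _
  have hSunion : S = Set.Icc (-M) (-1) ∪ Set.Icc 1 M := by
    ext z
    simp only [hSdef, Set.mem_setOf_eq, Set.mem_union, Set.mem_Icc]
    constructor
    · rintro ⟨h1, h2⟩
      rcases le_or_gt 0 z with h | h
      · right; rw [abs_of_nonneg h] at h1 h2; exact ⟨h1, h2⟩
      · left; rw [abs_of_neg h] at h1 h2; constructor <;> linarith
    · rintro (⟨h1, h2⟩ | ⟨h1, h2⟩)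
      · have hz0 : z < 0 := by linarith
        rw [abs_of_neg hz0]; constructor <;> linarith
      · have hz0 : (0:ℝ) ≤ z := by linarith
        rw [abs_of_nonneg hz0]; exact ⟨h1, h2⟩
  have hdisj : Disjoint (Set.Icc (-M) (-1:ℝ)) (Set.Icc 1 M) := by
    rw [Set.disjoint_left]; rintro z ⟨_, h2⟩ ⟨h3, _⟩; linarith
  have hpospart : (∫ z in Set.Icc (1:ℝ) M, |z| ^ (c-β)) = (M^(c-β+1) - 1)/(c-β+1) := by
    rw [integral_Icc_eq_integral_Ioc, ← intervalIntegral.integral_of_le hM1]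
    rw [intervalIntegral.integral_congr (g := fun z => z ^ (c-β)) (by
      intro z hz
      rw [Set.uIcc_of_le hM1] at hz
      simp only
      rw [abs_of_pos (lt_of_lt_of_le one_pos hz.1)])]
    rw [integral_rpow (Or.inl hc1), Real.one_rpow]
  have hnegpart : (∫ z in Set.Icc (-M) (-1:ℝ), |z| ^ (c-β)) = (M^(c-β+1) - 1)/(c-β+1) := by
    rw [integral_Icc_eq_integral_Ioc, ← intervalIntegral.integral_of_le (neg_le_neg hM1)]
    have hcomp : (∫ x in (-M)..(-1:ℝ), |x| ^ (c-β)) = ∫ x in (1:ℝ)..M, |(-x)| ^ (c-β) := by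
      rw [intervalIntegral.integral_comp_neg (fun z => |z| ^ (c-β))]
    rw [hcomp]
    rw [intervalIntegral.integral_congr (g := fun z => z ^ (c-β)) (by
      intro z hz
      rw [Set.uIcc_of_le hM1] at hz
      simp only [abs_neg]
      rw [abs_of_pos (lt_of_lt_of_le one_pos hz.1)])]
    rw [integral_rpow (Or.inl hc1), Real.one_rpow]
  have h4 : (∫ z in S, |z|^(c-β)) = 2*(M^(c-β+1) - 1)/(c-β+1) := by
    rw [hSunion, setIntegral_union hdisj measurableSet_Icc
      (habsint.mono_set (by rw [hSunion]; exact Set.subset_union_left))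
      (habsint.mono_set (by rw [hSunion]; exact Set.subset_union_right))]
    rw [hnegpart, hpospart]; ring
  have hEbound : |∫ z in S, E z| ≤ L*(apos+aneg)*s^γ * (2*(M^(c-β+1) - 1)/(c-β+1)) := by
    calc |∫ z in S, E z| ≤ ∫ z in S, |E z| := by
          simpa [Real.norm_eq_abs] using
            norm_integral_le_integral_norm (μ := volume.restrict S) E
      _ ≤ ∫ z in S, L*(apos+aneg)*s^γ * |z|^(c-β) :=
          setIntegral_mono_on hintE.abs hBint hSm herrb
      _ = L*(apos+aneg)*s^γ * ∫ z in S, |z|^(c-β) := integral_const_mul _ _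
      _ = _ := by rw [h4]
  rw [hIsplit, hIP, hIQ,
    show apos * (bp^(1-β)-1)/(1-β) + -(aneg * (bm^(1-β)-1)/(1-β)) + (∫ z in S, E z)
      - (apos * (bp^(1-β)-1)/(1-β) - aneg * (bm^(1-β)-1)/(1-β)) = ∫ z in S, E z by ring]
  refine le_trans hEbound ?_
  have hpow : s^γ * M^(c-β+1) = Δ ^ ((γ+β-1-c)/β) := by
    rw [hsdef, hMdef, ← Real.rpow_mul hΔ.le, ← Real.rpow_mul hΔ.le, ← Real.rpow_add hΔ]
    congr 1
    field_simp
    ring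
  rw [← hpow]
  have hdiff : 2*L*(apos+aneg)/(c-β+1) * (s^γ * M^(c-β+1))
      - L*(apos+aneg)*s^γ * (2*(M^(c-β+1) - 1)/(c-β+1))
      = 2*(L*(apos+aneg)*s^γ)/(c-β+1) := by
    field_simp
    ring
  have hnn : (0:ℝ) ≤ 2*(L*(apos+aneg)*s^γ)/(c-β+1) :=
    div_nonneg (by linarith) hc2.le
  linarith

/-- Convergence of the centering (drift-correction) term in the Lévy–Khintchine
computation (char) in the proof of Lemma 4, case `β > 1`: as `Δ → 0⁺`,
`∫_{1 ≤ |z| ≤ Δ^{−1/β}} z · Δ^{1+1/β} F′(Δ^{1/β} z) dz → (a⁺ − a⁻)/(β − 1)`. -/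
theorem stable_drift_correction_limit
    (β γ apos aneg εpos εneg L : ℝ)
    (hβ : β ∈ Set.Ioo (1 : ℝ) 2) (hγ : 0 < γ)
    (hapos : 0 < apos) (haneg : 0 < aneg)
    (hεpos : 0 < εpos) (hεneg : 0 < εneg) (hL : 0 ≤ L)
    (f : ℝ → ℝ) (hf : Measurable f) (hfb : ∀ x, |f x| ≤ L)
    (F' : ℝ → ℝ)
    (hF' : ∀ x, F' x = |x| ^ (-(1 + β)) * (1 + |x| ^ γ * f x) *
        ((if 0 < x ∧ x ≤ εpos then apos else 0) +
          (if -εneg ≤ x ∧ x < 0 then aneg else 0))) :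
    Tendsto (fun Δ : ℝ =>
        ∫ z in {z : ℝ | 1 ≤ |z| ∧ |z| ≤ Δ ^ (-(1 / β))},
          z * (Δ ^ (1 + 1 / β) * F' (Δ ^ (1 / β) * z)))
      (nhdsWithin 0 (Set.Ioi 0)) (nhds ((apos - aneg) / (β - 1))) := by
  obtain ⟨hβ1, hβ2⟩ := hβ
  have hβ0 : (0:ℝ) < β := by linarith
  set l := nhdsWithin (0:ℝ) (Set.Ioi 0) with hldef
  set c : ℝ := max γ (β-1+γ/2) with hcdef
  have hc2 : 0 < c - β + 1 := by
    have : β - 1 + γ/2 ≤ c := le_max_right _ _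
    linarith
  have hcγ : c < γ + β - 1 := max_lt (by linarith) (by linarith)
  have hη : 0 < (γ + β - 1 - c) / β := div_pos (by linarith) hβ0
  set I : ℝ → ℝ := fun Δ =>
    ∫ z in {z : ℝ | 1 ≤ |z| ∧ |z| ≤ Δ ^ (-(1 / β))},
      z * (Δ ^ (1 + 1 / β) * F' (Δ ^ (1 / β) * z)) with hIdef
  set A : ℝ → ℝ := fun Δ =>
    apos * ((min (Δ ^ (-(1/β))) (εpos * Δ ^ (-(1/β)))) ^ (1-β) - 1) / (1-β)
      - aneg * ((min (Δ ^ (-(1/β))) (εneg * Δ ^ (-(1/β)))) ^ (1-β) - 1) / (1-β) with hAdef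
  -- min (M Δ) (ε * M Δ) tends to atTop
  have hmin_tendsto : ∀ ε : ℝ, 0 < ε →
      Tendsto (fun Δ : ℝ => min (Δ ^ (-(1/β))) (ε * Δ ^ (-(1/β)))) l atTop := by
    intro ε hε
    have h0 : Tendsto (fun Δ : ℝ => min 1 ε * Δ ^ (-(1/β))) l atTop :=
      (rpow_neg_tendsto_atTop' (by positivity : (0:ℝ) < 1/β)).const_mul_atTop
        (lt_min one_pos hε)
    refine h0.congr' ?_
    filter_upwards [self_mem_nhdsWithin] with Δ (hΔ : (0:ℝ) < Δ)
    rw [min_mul_of_nonneg _ _ (Real.rpow_nonneg hΔ.le _), one_mul]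
  have hXp : ∀ ε : ℝ, 0 < ε →
      Tendsto (fun Δ : ℝ => (min (Δ ^ (-(1/β))) (ε * Δ ^ (-(1/β)))) ^ (1-β)) l (nhds 0) := by
    intro ε hε
    have h := (tendsto_rpow_neg_atTop (by linarith : (0:ℝ) < β - 1)).comp (hmin_tendsto ε hε)
    simpa [Function.comp_def, neg_sub] using h
  have hA : Tendsto A l (nhds ((apos - aneg) / (β - 1))) := by
    have h := ((((hXp εpos hεpos).sub_const 1).const_mul apos).div_const (1-β)).sub
      ((((hXp εneg hεneg).sub_const 1).const_mul aneg).div_const (1-β))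
    have hne : (1:ℝ) - β ≠ 0 := by intro h; linarith
    have hne' : β - 1 ≠ 0 := by intro h; linarith
    have hval : apos * (0 - 1) / (1-β) - aneg * (0 - 1) / (1-β) = (apos - aneg) / (β - 1) := by
      field_simp
      ring
    rw [hval] at h
    exact h
  have hev : ∀ᶠ Δ in l, |I Δ - A Δ| ≤
      2 * L * (apos + aneg) / (c - β + 1) * Δ ^ ((γ + β - 1 - c) / β) := by
    filter_upwards [self_mem_nhdsWithin, Ioo_mem_nhdsGT (zero_lt_one (α := ℝ)),
      (hmin_tendsto εpos hεpos).eventually (eventually_ge_atTop 1),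
      (hmin_tendsto εneg hεneg).eventually (eventually_ge_atTop 1)] with Δ h1 h2 h3 h4
    exact drift_compute β γ apos aneg εpos εneg L hβ1 hβ2 hγ hapos haneg hL f hf hfb F' hF'
      Δ h1 h2.2 h3 h4
  have hbound0 : Tendsto (fun Δ : ℝ =>
      2 * L * (apos + aneg) / (c - β + 1) * Δ ^ ((γ + β - 1 - c) / β)) l (nhds 0) := by
    have h := (rpow_tendsto_zero' hη).const_mul (2 * L * (apos + aneg) / (c - β + 1))
    simpa using h
  have hIA : Tendsto (fun Δ => I Δ - A Δ) l (nhds 0) :=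
    squeeze_zero_norm' (by simpa [Real.norm_eq_abs] using hev) hbound0
  have hfin := hA.add hIA
  rw [add_zero] at hfin
  exact hfin.congr (fun Δ => by ring)
end

section
/- Fix α > 0, T > 0 and ϖ with 1/2 < ϖ < 3/2. Suppose that on a probability space (Ω, F, P), for each n ≥ 1, (ξ_{n,1}, …, ξ_{n,n}) are independent real random variables each distributed as the centered Gaussian measure with variance Δ_n := T/n. Define U_n = Σ_{i=1}^{n} 1(|ξ_{n,i}| ≤ α Δ_n^{ϖ}). Then Δ_n^{3/2−ϖ} U_n converges in probability to 2αT/√(2π) as n → ∞. (This is the law of large numbers part of Theorem 1(1) under the null hypothesis H₀, in the case where the process is a standard Brownian motion, so that the increments are i.i.d. N(0, Δ_n): the normalized count of small increments converges to 2α·φ(0)·T.) -/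
/-!
The count `U_n` is a sum of `n` independent Bernoulli variables with success probability
`p_n = P(|N(0, Δ_n)| ≤ α Δ_n^ϖ)`. Since `ϖ > 1/2`, the window `α Δ_n^ϖ` is small on the scale
`√Δ_n` of the Gaussian, on which the density is nearly flat, so `p_n ~ 2 α Δ_n^ϖ φ(0) / √Δ_n`
and the mean of `Δ_n^{3/2-ϖ} U_n` tends to `2 α φ(0) T`. The variance of `Δ_n^{3/2-ϖ} U_n` is at
most `Δ_n^{3/2-ϖ}` times its mean, which vanishes because `ϖ < 3/2`; Chebyshev's inequality
concludes.
-/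

open MeasureTheory ProbabilityTheory Filter Set
open scoped NNReal ENNReal Real Topology

lemma tendstoInMeasure_of_tendsto_integral_of_tendsto_variance {Ω ι : Type*}
    [MeasurableSpace Ω] {P : Measure Ω} [IsFiniteMeasure P] {l : Filter ι} {X : ι → Ω → ℝ}
    {c : ℝ} (hX : ∀ i, MemLp (X i) 2 P) (hmean : Tendsto (fun i => P[X i]) l (𝓝 c))
    (hvar : Tendsto (fun i => variance (X i) P) l (𝓝 0)) :
    TendstoInMeasure P X l (fun _ => c) := by
  rw [tendstoInMeasure_iff_dist]
  intro ε hε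
  have hdev : ∀ᶠ i in l, P {ω | ε ≤ dist (X i ω) c} ≤
      ENNReal.ofReal (variance (X i) P / (ε / 2) ^ 2) := by
    filter_upwards [hmean.eventually (Metric.ball_mem_nhds c (half_pos hε))] with i hi
    refine (measure_mono fun ω hω => ?_).trans (meas_ge_le_variance_div_sq (hX i) (half_pos hε))
    simp only [mem_ofPred_eq, Real.dist_eq] at hω hi ⊢
    linarith [abs_sub_le (X i ω) P[X i] c]
  have hbound : Tendsto (fun i => ENNReal.ofReal (variance (X i) P / (ε / 2) ^ 2)) l (𝓝 0) := by
    simpa using ENNReal.tendsto_ofReal (hvar.div_const ((ε / 2) ^ 2))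
  exact tendsto_of_tendsto_of_tendsto_of_le_of_le' tendsto_const_nhds hbound
    (Eventually.of_forall fun _ => zero_le) hdev

noncomputable def hitCount {Ω ι E : Type*} (s : Finset ι) (X : ι → Ω → E) (B : Set E) (ω : Ω) :
    ℝ :=
  ∑ i ∈ s, B.indicator 1 (X i ω)

lemma hitCount_Icc {Ω ι : Type*} (s : Finset ι) (X : ι → Ω → ℝ) (a : ℝ) (ω : Ω) :
    hitCount s X (Icc (-a) a) ω = ∑ i ∈ s, if |X i ω| ≤ a then 1 else 0 := by
  simp [hitCount, Set.indicator_apply, abs_le]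

section HitCount

variable {Ω ι E : Type*} [MeasurableSpace Ω] [MeasurableSpace E] {P : Measure Ω}
  {s : Finset ι} {X : ι → Ω → E} {B : Set E}

lemma memLp_indicator_one_comp {Y : Ω → E} (hY : Measurable Y) (hB : MeasurableSet B)
    (p : ℝ≥0∞) [IsFiniteMeasure P] : MemLp (fun ω => B.indicator (1 : E → ℝ) (Y ω)) p P :=
  MemLp.of_bound ((measurable_const.indicator hB).comp hY).aestronglyMeasurable 1
    (Eventually.of_forall fun ω => by by_cases h : Y ω ∈ B <;> simp [h])

lemma integral_indicator_one_comp {Y : Ω → E} (hY : Measurable Y) (hB : MeasurableSet B) :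
    ∫ ω, B.indicator (1 : E → ℝ) (Y ω) ∂P = (P.map Y).real B := by
  rw [← integral_map (f := B.indicator 1) hY.aemeasurable
    (measurable_const.indicator hB).aestronglyMeasurable,
    integral_indicator_one hB]

lemma memLp_hitCount (hX : ∀ i, Measurable (X i)) (hB : MeasurableSet B) (p : ℝ≥0∞)
    [IsFiniteMeasure P] : MemLp (hitCount s X B) p P :=
  memLp_finsetSum s fun i _ => memLp_indicator_one_comp (hX i) hB p

lemma integral_hitCount {μ : Measure E} (hX : ∀ i, Measurable (X i)) (hB : MeasurableSet B)
    (hlaw : ∀ i ∈ s, P.map (X i) = μ) [IsFiniteMeasure P] :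
    P[hitCount s X B] = s.card * μ.real B := by
  unfold hitCount
  rw [integral_finsetSum s fun i _ => (memLp_indicator_one_comp (hX i) hB 1).integrable le_rfl]
  simp_rw [integral_indicator_one_comp (hX _) hB]
  rw [Finset.sum_congr rfl fun i hi => by rw [hlaw i hi], Finset.sum_const, nsmul_eq_mul]

lemma variance_hitCount_le {μ : Measure E} (hX : ∀ i, Measurable (X i)) (hB : MeasurableSet B)
    (hlaw : ∀ i ∈ s, P.map (X i) = μ) (hindep : Set.Pairwise s fun i j => IndepFun (X i) (X j) P)
    [IsProbabilityMeasure P] :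
    variance (hitCount s X B) P ≤ s.card * μ.real B := by
  set Y : ι → Ω → ℝ := fun i ω => B.indicator 1 (X i ω)
  have hYsq (i : ι) : Y i ^ 2 = Y i := by
    ext ω; by_cases h : X i ω ∈ B <;> simp [Y, h]
  have hindepY : Set.Pairwise s fun i j => IndepFun (Y i) (Y j) P := fun i hi j hj hij =>
    (hindep hi hj hij).comp (measurable_const.indicator hB) (measurable_const.indicator hB)
  have hsum : hitCount s X B = ∑ i ∈ s, Y i := by ext ω; simp [hitCount, Y]
  calc variance (hitCount s X B) P
      = ∑ i ∈ s, variance (Y i) P := by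
        rw [hsum, IndepFun.variance_sum (fun i _ => memLp_indicator_one_comp (hX i) hB 2) hindepY]
    _ ≤ ∑ i ∈ s, P[Y i] := Finset.sum_le_sum fun i _ => by
        simpa only [hYsq] using variance_le_expectation_sq (μ := P) (X := Y i)
          ((measurable_const.indicator hB).comp (hX i)).aestronglyMeasurable
    _ = s.card * μ.real B := by
        rw [Finset.sum_congr rfl fun i hi => by
          rw [integral_indicator_one_comp (hX i) hB, hlaw i hi], Finset.sum_const, nsmul_eq_mul]

end HitCount

section GaussianSmallBall

variable {v : ℝ≥0}

lemma gaussianPDFReal_zero_le_of_abs_le {x y : ℝ} (h : |x| ≤ |y|) :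
    gaussianPDFReal 0 v y ≤ gaussianPDFReal 0 v x := by
  simp only [gaussianPDFReal, sub_zero]
  gcongr _ * Real.exp (-?_ / _)
  exact sq_le_sq.mpr h

lemma gaussianReal_real_Icc_mem (hv : v ≠ 0) {a : ℝ} (ha : 0 ≤ a) :
    (gaussianReal 0 v).real (Icc (-a) a) ∈
      Icc (2 * a * gaussianPDFReal 0 v a) (2 * a * gaussianPDFReal 0 v 0) := by
  have hvol : volume.real (Icc (-a) a) = 2 * a := by
    rw [Real.volume_real_Icc_of_le (by linarith)]; ring
  have hconst (y : ℝ) :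
      ∫ _ in Icc (-a) a, gaussianPDFReal 0 v y = 2 * a * gaussianPDFReal 0 v y := by
    rw [setIntegral_const, smul_eq_mul, hvol]
  have hint : IntegrableOn (gaussianPDFReal 0 v) (Icc (-a) a) :=
    (integrable_gaussianPDFReal 0 v).integrableOn
  rw [measureReal_def, gaussianReal_apply_eq_integral 0 hv, ENNReal.toReal_ofReal
    (setIntegral_nonneg measurableSet_Icc fun x _ => gaussianPDFReal_nonneg 0 v x),
    ← hconst, ← hconst]
  constructor
  · refine setIntegral_mono_on (integrableOn_const (by simp)) hint measurableSet_Icc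
        fun x hx => gaussianPDFReal_zero_le_of_abs_le ?_
    rw [abs_of_nonneg ha]
    exact abs_le.mpr hx
  · exact setIntegral_mono_on hint (integrableOn_const (by simp)) measurableSet_Icc
      fun x _ => gaussianPDFReal_zero_le_of_abs_le (by simp)

lemma gaussianPDFReal_zero_eq_mul_exp (x : ℝ) :
    gaussianPDFReal 0 v x = gaussianPDFReal 0 v 0 * Real.exp (-(x ^ 2 / v) / 2) := by
  simp only [gaussianPDFReal, sub_zero, zero_pow two_ne_zero, neg_zero, zero_div, Real.exp_zero,
    mul_one]
  ring_nf

end GaussianSmallBall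

lemma tendsto_gaussianReal_real_Icc_div {ι : Type*} {l : Filter ι} {a : ι → ℝ} {v : ι → ℝ≥0}
    (hpos : ∀ᶠ i in l, v i ≠ 0 ∧ 0 < a i) (h : Tendsto (fun i => a i ^ 2 / v i) l (𝓝 0)) :
    Tendsto (fun i => (gaussianReal 0 (v i)).real (Icc (-a i) (a i)) /
      (2 * a i * gaussianPDFReal 0 (v i) 0)) l (𝓝 1) := by
  have hexp : Tendsto (fun i => Real.exp (-(a i ^ 2 / v i) / 2)) l (𝓝 1) := by
    simpa [Function.comp_def] using (Real.continuous_exp.tendsto _).comp (h.neg.div_const 2)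
  refine tendsto_of_tendsto_of_tendsto_of_le_of_le' hexp tendsto_const_nhds ?_ ?_
  all_goals
    filter_upwards [hpos] with i ⟨hv, ha⟩
    have hden : 0 < 2 * a i * gaussianPDFReal 0 (v i) 0 := by
      have := gaussianPDFReal_pos 0 (v i) 0 hv; positivity
    obtain ⟨hlow, hupp⟩ := gaussianReal_real_Icc_mem hv ha.le
  · rw [le_div_iff₀ hden]
    convert hlow using 1
    rw [gaussianPDFReal_zero_eq_mul_exp (a i)]
    ring
  · rwa [div_le_one hden]

lemma gaussianPDFReal_toNNReal_zero_of_pos {d : ℝ} (hd : 0 < d) :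
    gaussianPDFReal 0 d.toNNReal 0 = (√(2 * π) * d ^ (1 / 2 : ℝ))⁻¹ := by
  rw [gaussianPDFReal, Real.coe_toNNReal _ hd.le, Real.sqrt_mul (by positivity),
    Real.sqrt_eq_rpow d]
  simp

lemma tendsto_rpow_mul_gaussianReal_real_Icc_rpow {α ϖ : ℝ} (hα : 0 < α) (hϖ : 1 / 2 < ϖ) :
    Tendsto (fun d : ℝ => d ^ ((1 : ℝ) / 2 - ϖ) *
      (gaussianReal 0 d.toNNReal).real (Icc (-(α * d ^ ϖ)) (α * d ^ ϖ)))
      (𝓝[>] 0) (𝓝 (2 * α / √(2 * π))) := by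
  have hsq : Tendsto (fun d : ℝ => (α * d ^ ϖ) ^ 2 / d.toNNReal) (𝓝[>] 0) (𝓝 0) := by
    have hpow : Tendsto (fun d : ℝ => α ^ 2 * d ^ (2 * ϖ - 1)) (𝓝[>] 0) (𝓝 0) := by
      simpa using ((tendsto_id.mono_left nhdsWithin_le_nhds).rpow_const_nhds_zero
        (by linarith : 0 < 2 * ϖ - 1)).const_mul (α ^ 2)
    refine hpow.congr' ?_
    filter_upwards [self_mem_nhdsWithin] with d (hd : 0 < d)
    rw [Real.coe_toNNReal _ hd.le, Real.rpow_sub hd, Real.rpow_one, mul_comm 2 ϖ,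
      Real.rpow_mul hd.le, Real.rpow_two]
    ring
  have hratio := tendsto_gaussianReal_real_Icc_div (eventually_nhdsWithin_of_forall (s := Ioi 0)
    fun d (hd : 0 < d) => ⟨by simpa using hd, by positivity⟩) hsq
  refine Tendsto.congr' ?_ (by simpa only [mul_one] using hratio.const_mul (2 * α / √(2 * π)))
  filter_upwards [self_mem_nhdsWithin] with d (hd : 0 < d)
  rw [gaussianPDFReal_toNNReal_zero_of_pos hd, Real.rpow_sub hd]
  field_simp

lemma tendsto_div_natCast_nhdsGT_zero {T : ℝ} (hT : 0 < T) :
    Tendsto (fun n : ℕ => T / n) atTop (𝓝[>] 0) :=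
  tendsto_nhdsWithin_iff.mpr ⟨tendsto_const_div_atTop_nhds_zero_nat T,
    (eventually_gt_atTop 0).mono fun _ hn => div_pos hT (Nat.cast_pos.mpr hn)⟩

lemma tendsto_small_increment_count_mean {α T ϖ : ℝ} (hα : 0 < α) (hT : 0 < T)
    (hϖ : 1 / 2 < ϖ) :
    Tendsto (fun n : ℕ => (T / n) ^ ((3 : ℝ) / 2 - ϖ) *
      (n * (gaussianReal 0 (T / n).toNNReal).real (Icc (-(α * (T / n) ^ ϖ)) (α * (T / n) ^ ϖ))))
      atTop (𝓝 (2 * α * T / √(2 * π))) := by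
  have h := ((tendsto_rpow_mul_gaussianReal_real_Icc_rpow hα hϖ).comp
    (tendsto_div_natCast_nhdsGT_zero hT)).const_mul T
  rw [show T * (2 * α / √(2 * π)) = 2 * α * T / √(2 * π) by ring] at h
  refine h.congr' ?_
  filter_upwards [eventually_gt_atTop 0] with n hn
  have hΔ : 0 < T / n := div_pos hT (Nat.cast_pos.mpr hn)
  rw [Function.comp_apply, show (3 : ℝ) / 2 - ϖ = (1 / 2 - ϖ) + 1 by ring, Real.rpow_add hΔ,
    Real.rpow_one]
  field_simp

/-- Law of large numbers part of Theorem 1(1) under `H₀` for a standard Brownian motion: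
if for each `n` the increments `ξ_{n,1}, …, ξ_{n,n}` are i.i.d. `N(0, Δ_n)` with
`Δ_n = T/n`, then the normalized small-increment count
`Δ_n^{3/2−ϖ} Σ_{i=1}^n 1(|ξ_{n,i}| ≤ αΔ_n^ϖ)` converges in probability to
`2αT/√(2π) = 2α φ(0) T`. -/
theorem small_increment_count_lln
    {Ω : Type*} [MeasurableSpace Ω] (P : Measure Ω) [IsProbabilityMeasure P]
    (α T ϖ : ℝ) (hα : 0 < α) (hT : 0 < T) (hϖ1 : 1 / 2 < ϖ) (hϖ2 : ϖ < 3 / 2)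
    (ξ : ℕ → ℕ → Ω → ℝ)
    (hmeas : ∀ n i, Measurable (ξ n i))
    (hindep : ∀ n, iIndepFun
      (fun i : Fin n => ξ n (i : ℕ)) P)
    (hdist : ∀ n i, 1 ≤ n → i < n →
      Measure.map (ξ n i) P = gaussianReal 0 (T / (n : ℝ)).toNNReal) :
    TendstoInMeasure P
      (fun (n : ℕ) ω => (T / (n : ℝ)) ^ ((3 : ℝ) / 2 - ϖ) *
        ∑ i ∈ Finset.range n, (if |ξ n i ω| ≤ α * (T / (n : ℝ)) ^ ϖ then (1 : ℝ) else 0))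
      atTop
      (fun _ => 2 * α * T / Real.sqrt (2 * Real.pi)) := by
  simp_rw [← hitCount_Icc]
  have hlaw (n : ℕ) : ∀ i ∈ Finset.range n, P.map (ξ n i) = gaussianReal 0 (T / n).toNNReal :=
    fun i hi => hdist n i (by grind) (Finset.mem_range.mp hi)
  have hmean := tendsto_small_increment_count_mean hα hT hϖ1
  have hscale : Tendsto (fun n : ℕ => (T / n) ^ ((3 : ℝ) / 2 - ϖ)) atTop (𝓝 0) :=
    (tendsto_const_div_atTop_nhds_zero_nat T).rpow_const_nhds_zero (by linarith)
  refine tendstoInMeasure_of_tendsto_integral_of_tendsto_variance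
    (fun n => (memLp_hitCount (hmeas n) measurableSet_Icc 2).const_mul _) ?_ ?_
  · simpa only [integral_const_mul, integral_hitCount (hmeas _) measurableSet_Icc (hlaw _),
      Finset.card_range] using hmean
  · refine tendsto_of_tendsto_of_tendsto_of_le_of_le tendsto_const_nhds
      (by simpa using hscale.mul hmean) (fun n => variance_nonneg _ _) fun n => ?_
    rw [variance_const_mul, sq, mul_assoc]
    gcongr
    simpa using variance_hitCount_le (hmeas n) measurableSet_Icc (hlaw n) fun i hi j hj hij =>
      (hindep n).indepFun (i := ⟨i, Finset.mem_range.mp hi⟩) (j := ⟨j, Finset.mem_range.mp hj⟩)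
        (by simpa [Fin.ext_iff] using hij)
end
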